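/- arXiv:2012.10172 — 3 statements merged into one kernel-verified Lean document; each statement's English description precedes it below -/
import Mathlib

section
/- Let α be a type and let c : ℕ → List α be a sequence of chains satisfying the bounded displacement property with bound dis : ℕ. Then pruning the last dis blocks of every chain yields pairwise prefix-comparable chains: for all n and m, ((c n).take ((c n).length - dis)) is a prefix of ((c m).take ((c m).length - dis)), or ((c m).take ((c m).length - dis)) is a prefix of ((c n).take ((c n).length - dis)). (This is the core of the paper's Theorem 1: known bounded displacement eventual prefix consistency yields the strong prefix property, hence is equivalent to Consensus.) -/
/-- The sequence of chains `c` satisfies the bounded displacement property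
with bound `dis`. -/
def BoundedDisplacement {α : Type*} (c : ℕ → List α) (dis : ℕ) : Prop :=
  ∀ n m, n ≤ m → ∀ i, i + dis < (c n).length → (c n)[i]? = (c m)[i]?

namespace BoundedDisplacement

variable {α : Type*} {c : ℕ → List α} {dis : ℕ}

theorem take_eq_take (hbd : BoundedDisplacement c dis) {n m : ℕ} (hnm : n ≤ m) :
    (c n).take ((c n).length - dis) = (c m).take ((c n).length - dis) := by
  refine List.ext_getElem? fun i => ?_
  simp only [List.getElem?_take]
  split_ifs with hi
  · exact hbd n m hnm i (by omega)
  · rfl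

theorem take_prefix (hbd : BoundedDisplacement c dis) {n m : ℕ} (hnm : n ≤ m) :
    (c n).take ((c n).length - dis) <+: c m :=
  hbd.take_eq_take hnm ▸ List.take_prefix _ _

end BoundedDisplacement

theorem known_bounded_displacement_strong_prefix {α : Type*} (c : ℕ → List α) (dis : ℕ)
    (hbd : BoundedDisplacement c dis) :
    ∀ n m, ((c n).take ((c n).length - dis)) <+: ((c m).take ((c m).length - dis)) ∨
      ((c m).take ((c m).length - dis)) <+: ((c n).take ((c n).length - dis)) := by
  intro n m
  rcases le_total n m with hnm | hmn
  · exact List.prefix_or_prefix_of_prefix (hbd.take_prefix hnm) (List.take_prefix _ _)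
  · exact List.prefix_or_prefix_of_prefix (List.take_prefix _ _) (hbd.take_prefix hmn)
end

section
/- Let α be a type and let c : ℕ → List α be a sequence of chains. Suppose there exists N such that (i) for all n, m with N ≤ n ≤ m, (c n) is a prefix of (c m) or (c m) is a prefix of (c n), and (ii) the lengths are nondecreasing from N on, i.e. for all n, m with N ≤ n ≤ m, (c n).length ≤ (c m).length. Then there exists dis : ℕ such that c satisfies the bounded displacement property with bound dis. (This is the converse direction of the paper's Theorem 2: the eventual strong prefix property implies unknown bounded displacement eventual prefix consistency.) -/
namespace List

variable {α : Type*}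

theorem IsPrefix.getElem?_eq {l₁ l₂ : List α} (h : l₁ <+: l₂) {i : ℕ} (hi : i < l₁.length) :
    l₁[i]? = l₂[i]? := by
  obtain ⟨t, rfl⟩ := h
  exact (getElem?_append_left hi).symm

theorem isPrefix_of_isPrefix_or_isPrefix_of_length_le {l₁ l₂ : List α}
    (h : l₁ <+: l₂ ∨ l₂ <+: l₁) (hlen : l₁.length ≤ l₂.length) : l₁ <+: l₂ := by
  rcases h with h | h
  · exact h
  · exact (h.eq_of_length_le hlen).symm ▸ prefix_refl l₂

end List

theorem BoundedDisplacement.of_eventually_isPrefix {α : Type*} {c : ℕ → List α} {N : ℕ}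
    (hpre : ∀ n m, N ≤ n → n ≤ m → c n <+: c m) :
    BoundedDisplacement c ((Finset.range N).sup fun n => (c n).length) := by
  intro n m hnm i hi
  have hN : N ≤ n := by
    by_contra! hn
    have := Finset.le_sup (f := fun n => (c n).length) (Finset.mem_range.mpr hn)
    omega
  exact (hpre n m hN hnm).getElem?_eq (by omega)

theorem eventual_strong_prefix_implies_bounded_displacement {α : Type*}
    (c : ℕ → List α)
    (h : ∃ N, (∀ n m, N ≤ n → n ≤ m → (c n) <+: (c m) ∨ (c m) <+: (c n)) ∧
      (∀ n m, N ≤ n → n ≤ m → (c n).length ≤ (c m).length)) :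
    ∃ dis : ℕ, BoundedDisplacement c dis := by
  obtain ⟨N, hcomp, hlen⟩ := h
  exact ⟨_, BoundedDisplacement.of_eventually_isPrefix fun n m hn hnm =>
    List.isPrefix_of_isPrefix_or_isPrefix_of_length_le (hcomp n m hn hnm) (hlen n m hn hnm)⟩
end

section
/- Let C, C' : List ℕ be two notarized chains (lists of epoch numbers indexed by height). Suppose C contains three adjacent blocks with consecutive epochs: h + 2 < C.length with C[h] = e, C[h+1] = e + 1, C[h+2] = e + 2; and suppose C' contains a block of strictly higher epoch: k < C'.length with e + 2 < C'[k]. Then there exist inconsistent positions, i.e. there exist i < C.length and j < C'.length such that C[i] = C'[j], or (C[i] < C'[j] and j < i), or (C'[j] < C[i] and i < j). (This is the combinatorial core of the paper's proof of Theorem 7: in the modified Streamlet protocol, a fork between finalized chains forces the existence of two notarized blocks that are inconsistent with one another.) -/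
/-! Two chains without an inconsistent pair merge into one strictly increasing sequence: a
lower height always carries a lower epoch. So the higher block of `C'` lies above height `h + 2`,
and the block of `C'` at height `h + 1` has an epoch strictly between `e` and `e + 2` that is not
`e + 1`, which is impossible. -/

/-- No pair of positions is inconsistent, i.e. heights and epochs across the two chains are
ordered alike. -/
def ConsistentChains (C C' : List ℕ) : Prop :=
  ∀ i j (hi : i < C.length) (hj : j < C'.length),
    C[i] ≠ C'[j] ∧ (i < j → C[i] < C'[j]) ∧ (j < i → C'[j] < C[i])

namespace ConsistentChains

variable {C C' : List ℕ}

theorem of_not_exists_inconsistent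
    (hn : ¬ ∃ i j, ∃ (hi : i < C.length) (hj : j < C'.length),
      C[i] = C'[j] ∨ (C[i] < C'[j] ∧ j < i) ∨ (C'[j] < C[i] ∧ i < j)) :
    ConsistentChains C C' := by
  intro i j hi hj
  have hij : ¬ (C[i] = C'[j] ∨ (C[i] < C'[j] ∧ j < i) ∨ (C'[j] < C[i] ∧ i < j)) :=
    fun H => hn ⟨i, j, hi, hj, H⟩
  omega

theorem le_of_lt (hc : ConsistentChains C C') {i j : ℕ} (hi : i < C.length)
    (hj : j < C'.length) (hlt : C[i] < C'[j]) : i ≤ j := by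
  have := hc i j hi hj
  omega

theorem le_of_consecutive_epochs (hc : ConsistentChains C C') {h e k : ℕ}
    (hC0 : C[h]? = some e) (hC1 : C[h + 1]? = some (e + 1)) (hC2 : C[h + 2]? = some (e + 2))
    (hk : k < C'.length) : C'[k] ≤ e + 2 := by
  obtain ⟨h0, hC0⟩ := List.getElem?_eq_some_iff.1 hC0
  obtain ⟨h1, hC1⟩ := List.getElem?_eq_some_iff.1 hC1
  obtain ⟨h2, hC2⟩ := List.getElem?_eq_some_iff.1 hC2
  by_contra! hk'
  have hkh : h + 2 ≤ k := hc.le_of_lt h2 hk (hC2 ▸ hk')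
  have hj : h + 1 < C'.length := by omega
  have above := (hc h (h + 1) h0 hj).2.1 (by omega)
  have below := (hc (h + 2) (h + 1) h2 hj).2.2 (by omega)
  have ne := (hc (h + 1) (h + 1) h1 hj).1
  omega

end ConsistentChains

theorem fork_inconsistent_blocks_of_higher_epoch (C C' : List ℕ) (h e k : ℕ)
    (hh : h + 2 < C.length)
    (hC0 : C[h] = e) (hC1 : C[h + 1] = e + 1) (hC2 : C[h + 2] = e + 2)
    (hk : k < C'.length) (hk' : e + 2 < C'[k]) :
    ∃ i j, ∃ (hi : i < C.length) (hj : j < C'.length),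
      C[i] = C'[j] ∨ (C[i] < C'[j] ∧ j < i) ∨ (C'[j] < C[i] ∧ i < j) := by
  by_contra hn
  have hc := ConsistentChains.of_not_exists_inconsistent hn
  have hle := hc.le_of_consecutive_epochs (List.getElem?_eq_some_iff.2 ⟨_, hC0⟩)
    (List.getElem?_eq_some_iff.2 ⟨_, hC1⟩) (List.getElem?_eq_some_iff.2 ⟨_, hC2⟩) hk
  exact hle.not_gt hk'
end
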